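/- arXiv:1702.08770 — 6 statements merged into one kernel-verified Lean document; each statement's English description precedes it below -/
import Mathlib

section
/- Let φ : ℝⁿ → ℝ ∪ {+∞} be differentiable at y, and suppose φ is pointwise strongly convex at y with constant μ > 0 on a convex neighborhood V of y, i.e., for all τ ∈ (0,1) and all x ∈ V, φ(τx + (1−τ)y) ≤ τφ(x) + (1−τ)φ(y) − (μ/2)τ(1−τ)‖x − y‖². Then φ is pointwise quadratically supportable at y with the same constant μ on V, i.e., φ(x) ≥ φ(y) + ⟨∇φ(y), x − y⟩ + (μ/2)‖x − y‖² for all x ∈ V. -/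
/-!
Restrict `φ` to the segment `τ ↦ (1 - τ) y + τ x`. Strong convexity bounds the difference
quotient at `τ = 0` by `φ x - φ y - (μ/2)(1 - τ)‖x - y‖²`, and letting `τ → 0⁺` turns the
difference quotient into the directional derivative `⟪∇φ(y), x - y⟫`.
-/

open Filter Set Topology

open scoped RealInnerProductSpace

theorem HasDerivAt.add_add_le_of_chord_sub_le {f : ℝ → ℝ} {f' c : ℝ}
    (hf : HasDerivAt f f' 0)
    (hconv : ∀ τ ∈ Ioo (0 : ℝ) 1, f τ ≤ (1 - τ) * f 0 + τ * f 1 - c * τ * (1 - τ)) :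
    f 0 + f' + c ≤ f 1 := by
  have hslope : Tendsto (slope f 0) (𝓝[>] 0) (𝓝 f') :=
    (hasDerivAt_iff_tendsto_slope.mp hf).mono_left (nhdsWithin_mono 0 fun _ h ↦ ne_of_gt h)
  have hslope_le : ∀ᶠ τ in 𝓝[>] 0, slope f 0 τ ≤ f 1 - f 0 - c * (1 - τ) := by
    filter_upwards [Ioo_mem_nhdsGT (zero_lt_one' ℝ)] with τ hτ
    rw [slope_def_field, sub_zero, div_le_iff₀ hτ.1]
    linarith [hconv τ hτ]
  have hbound : Tendsto (fun τ : ℝ ↦ f 1 - f 0 - c * (1 - τ)) (𝓝[>] 0) (𝓝 (f 1 - f 0 - c)) := by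
    have : Continuous fun τ : ℝ ↦ f 1 - f 0 - c * (1 - τ) := by fun_prop
    simpa using this.continuousWithinAt (s := Ioi 0) (x := 0) |>.tendsto
  linarith [le_of_tendsto_of_tendsto hslope hbound hslope_le]

theorem HasFDerivAt.add_add_le_of_segment_chord_sub_le {E : Type*} [NormedAddCommGroup E]
    [NormedSpace ℝ E] {φ : E → ℝ} {φ' : E →L[ℝ] ℝ} {x y : E} {c : ℝ}
    (hφ : HasFDerivAt φ φ' y)
    (hconv : ∀ τ ∈ Ioo (0 : ℝ) 1,
      φ (τ • x + (1 - τ) • y) ≤ τ * φ x + (1 - τ) * φ y - c * τ * (1 - τ)) :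
    φ y + φ' (x - y) + c ≤ φ x := by
  have hφ₀ : HasFDerivAt φ φ' (AffineMap.lineMap y x (0 : ℝ)) := by simpa using hφ
  have hline : HasDerivAt (φ ∘ AffineMap.lineMap (k := ℝ) y x) (φ' (x - y)) 0 :=
    hφ₀.comp_hasDerivAt 0 AffineMap.hasDerivAt_lineMap
  simpa using hline.add_add_le_of_chord_sub_le fun τ hτ ↦ by
    simpa [AffineMap.lineMap_apply_module, add_comm, mul_comm] using hconv τ hτ

theorem pqs_of_pointwise_strongly_convex_general {n : ℕ}
    (φ : EuclideanSpace ℝ (Fin n) → ℝ) (y g : EuclideanSpace ℝ (Fin n))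
    (hdiff : HasGradientAt φ g y)
    (V : Set (EuclideanSpace ℝ (Fin n)))
    (μ : ℝ)
    (hpsc : ∀ x ∈ V, ∀ τ : ℝ, 0 < τ → τ < 1 →
      φ (τ • x + (1 - τ) • y) ≤ τ * φ x + (1 - τ) * φ y - μ / 2 * τ * (1 - τ) * ‖x - y‖ ^ 2) :
    ∀ x ∈ V, φ y + ⟪g, x - y⟫ + μ / 2 * ‖x - y‖ ^ 2 ≤ φ x := by
  intro x hx
  have hsupport := hdiff.hasFDerivAt.add_add_le_of_segment_chord_sub_le (x := x)
    (c := μ / 2 * ‖x - y‖ ^ 2) fun τ hτ ↦ by linarith [hpsc x hx τ hτ.1 hτ.2]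
  simpa using hsupport

/-- If `φ` is differentiable at `y` (with gradient `g`) and pointwise strongly convex at `y`
with constant `μ > 0` on a convex neighborhood `V` of `y`, i.e.
`φ(τx + (1-τ)y) ≤ τ φ(x) + (1-τ) φ(y) - (μ/2) τ (1-τ) ‖x - y‖²` for all `τ ∈ (0,1)` and
`x ∈ V`, then `φ` is pointwise quadratically supportable at `y` with the same constant `μ`
on `V`: `φ(x) ≥ φ(y) + ⟪∇φ(y), x - y⟫ + (μ/2) ‖x - y‖²` for all `x ∈ V`. -/
theorem pqs_of_pointwise_strongly_convex {n : ℕ}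
    (φ : EuclideanSpace ℝ (Fin n) → ℝ) (y g : EuclideanSpace ℝ (Fin n))
    (hdiff : HasGradientAt φ g y)
    (V : Set (EuclideanSpace ℝ (Fin n))) (hV : V ∈ nhds y) (hVconv : Convex ℝ V)
    (μ : ℝ) (hμ : 0 < μ)
    (hpsc : ∀ x ∈ V, ∀ τ : ℝ, 0 < τ → τ < 1 →
      φ (τ • x + (1 - τ) • y) ≤ τ * φ x + (1 - τ) * φ y - μ / 2 * τ * (1 - τ) * ‖x - y‖ ^ 2) :
    ∀ x ∈ V, φ y + ⟪g, x - y⟫ + μ / 2 * ‖x - y‖ ^ 2 ≤ φ x :=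
  pqs_of_pointwise_strongly_convex_general φ y g hdiff V μ hpsc
end

section
/- Fix 0 < ε < α and define the modified Huber function φ : ℝ → ℝ by φ(t) = ((t+ε)² − ε²)/(2α) if 0 ≤ t ≤ α − ε, φ(t) = ((t−ε)² − ε²)/(2α) if −(α−ε) ≤ t ≤ 0, and φ(t) = |t| + ε − (ε² + α²)/(2α) if |t| > α − ε. Then: (i) φ is convex on ℝ; (ii) the convex subdifferential of φ at 0 equals the interval [−ε/α, ε/α]; (iii) φ is pointwise quadratically supportable at 0 on bounded sets; and (iv) φ is not strongly convex on ℝ, i.e., there is no μ > 0 such that t ↦ φ(t) − (μ/2)t² is convex on ℝ. -/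
/-- The modified Huber function of the paper (equation (1.4)):
`φ(t) = ((t+ε)² - ε²)/(2α)` for `0 ≤ t ≤ α - ε`,
`φ(t) = ((t-ε)² - ε²)/(2α)` for `-(α-ε) ≤ t ≤ 0`, and
`φ(t) = |t| + ε - (ε² + α²)/(2α)` for `|t| > α - ε`. -/
noncomputable def modifiedHuber (α ε : ℝ) (t : ℝ) : ℝ :=
  if 0 ≤ t ∧ t ≤ α - ε then ((t + ε) ^ 2 - ε ^ 2) / (2 * α)
  else if -(α - ε) ≤ t ∧ t ≤ 0 then ((t - ε) ^ 2 - ε ^ 2) / (2 * α)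
  else |t| + ε - (ε ^ 2 + α ^ 2) / (2 * α)

/-!
Write `β = α - ε` and let `huber β` be the Huber function (`t ^ 2 / 2` on `[-β, β]`, affine
outside). Then `φ t = (ε / α) |t| + huber β t / α`. The Huber function is the pointwise maximum of
the affine functions `t ↦ v t - v ^ 2 / 2` over `|v| ≤ β`, the maximum being attained; hence it is
convex, nonnegative, at most `t ^ 2 / 2`, and on a bounded set it dominates a positive multiple
of `t ^ 2`. The kink `(ε / α) |t|` produces the subdifferential `[-ε/α, ε/α]` at `0`, the Huber
part yields the quadratic support, and for `t > β` the function `φ` is affine, which rules out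
strong convexity.
-/

open Set Filter Topology

def subdifferential (f : ℝ → ℝ) (x : ℝ) : Set ℝ :=
  {v | ∀ y, f x + v * (y - x) ≤ f y}

def QuadraticallySupportableAt (f : ℝ → ℝ) (x : ℝ) : Prop :=
  ∀ V ∈ 𝓝 x, Bornology.IsBounded V → ∃ μ : ℝ, 0 < μ ∧
    ∀ v ∈ subdifferential f x, ∀ y ∈ V, f x + v * (y - x) + μ / 2 * ‖y - x‖ ^ 2 ≤ f y

theorem convexOn_univ_of_subdifferential_nonempty {f : ℝ → ℝ}
    (h : ∀ x, (subdifferential f x).Nonempty) : ConvexOn ℝ univ f := by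
  refine ⟨convex_univ, fun x _ y _ a b ha hb hab => ?_⟩
  set z := a • x + b • y
  obtain ⟨v, hv⟩ := h z
  have hz : a * (x - z) + b * (y - z) = 0 := by
    simp only [z, smul_eq_mul]; linear_combination (-(a * x) - b * y) * hab
  calc f z = a * (f z + v * (x - z)) + b * (f z + v * (y - z)) := by
        linear_combination (-f z) * hab - v * hz
    _ ≤ a • f x + b • f y := by
        simp only [smul_eq_mul]; gcongr <;> exact hv _

theorem le_of_forall_pos_mul_le_mul_add_sq {v a b : ℝ}
    (h : ∀ t, 0 < t → v * t ≤ a * t + b * t ^ 2) : v ≤ a := by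
  have hlim : Tendsto (fun t => a + b * t) (𝓝[>] 0) (𝓝 a) := by
    refine tendsto_nhdsWithin_of_tendsto_nhds ?_
    simpa using ((tendsto_id (x := 𝓝 (0 : ℝ))).const_mul b).const_add a
  refine ge_of_tendsto hlim (eventually_nhdsWithin_of_forall fun t (ht : 0 < t) => ?_)
  refine le_of_mul_le_mul_right ?_ ht
  linear_combination h t ht

theorem abs_le_of_forall_mul_le_abs_add_sq {v a b : ℝ}
    (h : ∀ x, v * x ≤ a * |x| + b * x ^ 2) : |v| ≤ a := by
  refine abs_le.2 ⟨?_, le_of_forall_pos_mul_le_mul_add_sq (b := b) fun t ht => ?_⟩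
  · refine neg_le.1 (le_of_forall_pos_mul_le_mul_add_sq (b := b) fun t ht => ?_)
    simpa [abs_of_pos ht] using h (-t)
  · simpa [abs_of_pos ht] using h t

noncomputable def huber (β t : ℝ) : ℝ :=
  if |t| ≤ β then t ^ 2 / 2 else β * (|t| - β / 2)

section Huber

variable {β : ℝ}

theorem mul_sub_sq_le_huber {v : ℝ} (hv : |v| ≤ β) (t : ℝ) : v * t - v ^ 2 / 2 ≤ huber β t := by
  unfold huber
  split_ifs with ht
  · nlinarith [sq_nonneg (t - v)]
  · replace ht := (not_le.1 ht).le
    have hvt : v * t ≤ |v| * |t| := by rw [← abs_mul]; exact le_abs_self _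
    nlinarith [sq_abs v, abs_nonneg v, mul_nonneg (sub_nonneg.2 hv) (sub_nonneg.2 ht)]

theorem exists_huber_eq (hβ : 0 ≤ β) (t : ℝ) :
    ∃ v, |v| ≤ β ∧ huber β t = v * t - v ^ 2 / 2 := by
  unfold huber
  split_ifs with ht
  · exact ⟨t, ht, by ring⟩
  · rcases le_or_gt 0 t with h0 | h0
    · exact ⟨β, (abs_of_nonneg hβ).le, by rw [abs_of_nonneg h0]; ring⟩
    · exact ⟨-β, (abs_neg β ▸ abs_of_nonneg hβ).le, by rw [abs_of_neg h0]; ring⟩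

theorem huber_nonneg (hβ : 0 ≤ β) (t : ℝ) : 0 ≤ huber β t := by
  simpa using mul_sub_sq_le_huber (v := 0) (by simpa using hβ) t

theorem huber_le_sq_div_two (hβ : 0 ≤ β) (t : ℝ) : huber β t ≤ t ^ 2 / 2 := by
  obtain ⟨v, -, hv⟩ := exists_huber_eq hβ t
  nlinarith [sq_nonneg (t - v)]

theorem convexOn_huber (hβ : 0 ≤ β) : ConvexOn ℝ univ (huber β) :=
  convexOn_univ_of_subdifferential_nonempty fun x => by
    obtain ⟨v, hvβ, hv⟩ := exists_huber_eq hβ x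
    refine ⟨v, fun y => ?_⟩
    linarith [mul_sub_sq_le_huber hvβ y]

theorem div_mul_sq_le_huber (hβ : 0 < β) {R t : ℝ} (hR : β ≤ R) (ht : |t| ≤ R) :
    β / (2 * R) * t ^ 2 ≤ huber β t := by
  have hR0 : 0 < R := hβ.trans_le hR
  rw [div_mul_eq_mul_div, div_le_iff₀ (by positivity), huber, ← sq_abs t]
  split_ifs with htβ
  · nlinarith [sq_nonneg |t|]
  · have hβt : β ≤ |t| := (not_le.1 htβ).le
    nlinarith [mul_le_mul_of_nonneg_left (mul_le_mul_of_nonneg_right ht (abs_nonneg t)) hβ.le,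
      mul_nonneg (mul_nonneg hβ.le hR0.le) (sub_nonneg.2 hβt)]

end Huber

theorem not_convexOn_Ioi_sub_sq_of_eq_affine {f : ℝ → ℝ} {a b c μ : ℝ} (hμ : 0 < μ)
    (hf : ∀ t, c < t → f t = a * t + b) : ¬ ConvexOn ℝ (Ioi c) fun t => f t - μ / 2 * t ^ 2 := by
  intro h
  have hmid := h.2 (show c + 1 ∈ Ioi c by simp) (show c + 3 ∈ Ioi c by simp)
    (show (0 : ℝ) ≤ 1 / 2 by norm_num) (show (0 : ℝ) ≤ 1 / 2 by norm_num) (by norm_num)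
  have hc : (1 / 2 : ℝ) * (c + 1) + 1 / 2 * (c + 3) = c + 2 := by ring
  simp only [smul_eq_mul, hc] at hmid
  rw [hf _ (by linarith : c < c + 1), hf _ (by linarith : c < c + 2),
    hf _ (by linarith : c < c + 3)] at hmid
  nlinarith

section ModifiedHuber

variable {α ε : ℝ}

theorem modifiedHuber_eq_abs_add_huber (hα : α ≠ 0) (hεα : ε ≤ α) (t : ℝ) :
    modifiedHuber α ε t = ε / α * |t| + huber (α - ε) t / α := by
  unfold modifiedHuber huber
  rcases le_total 0 t with ht | ht
  · rw [abs_of_nonneg ht]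
    split_ifs <;> field_simp <;> grind
  · rw [abs_of_nonpos ht]
    split_ifs <;> field_simp <;> grind

theorem modifiedHuber_zero (hεα : ε ≤ α) : modifiedHuber α ε 0 = 0 := by
  simp [modifiedHuber, hεα]

theorem modifiedHuber_of_sub_lt (hεα : ε ≤ α) {t : ℝ} (ht : α - ε < t) :
    modifiedHuber α ε t = t + ε - (ε ^ 2 + α ^ 2) / (2 * α) := by
  have ht0 : 0 < t := by linarith
  rw [modifiedHuber, if_neg (fun h => ht.not_ge h.2), if_neg (fun h => ht0.not_ge h.2),
    abs_of_pos ht0]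

theorem convexOn_modifiedHuber (hε : 0 ≤ ε) (hεα : ε < α) :
    ConvexOn ℝ univ (modifiedHuber α ε) := by
  have hα : 0 < α := hε.trans_lt hεα
  refine ((convexOn_univ_norm.smul (div_nonneg hε hα.le)).add
    ((convexOn_huber (sub_nonneg.2 hεα.le)).smul (inv_nonneg.2 hα.le))).congr fun t _ => ?_
  rw [modifiedHuber_eq_abs_add_huber hα.ne' hεα.le, Pi.add_apply, smul_eq_mul, smul_eq_mul,
    Real.norm_eq_abs, div_eq_inv_mul (huber _ t)]

theorem huber_div_le_modifiedHuber_sub_mul (hα : 0 < α) (hεα : ε ≤ α) {v : ℝ}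
    (hv : |v| ≤ ε / α) (x : ℝ) : huber (α - ε) x / α ≤ modifiedHuber α ε x - v * x := by
  have hvx : v * x ≤ ε / α * |x| :=
    calc v * x ≤ |v| * |x| := abs_mul v x ▸ le_abs_self _
      _ ≤ ε / α * |x| := by gcongr
  rw [modifiedHuber_eq_abs_add_huber hα.ne' hεα]
  linarith

theorem subdifferential_modifiedHuber_zero (hε : 0 ≤ ε) (hεα : ε < α) :
    subdifferential (modifiedHuber α ε) 0 = Icc (-(ε / α)) (ε / α) := by
  have hα : 0 < α := hε.trans_lt hεα
  have hβ : 0 ≤ α - ε := sub_nonneg.2 hεα.le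
  ext v
  simp only [subdifferential, modifiedHuber_zero hεα.le, zero_add, sub_zero, mem_Icc, ← abs_le]
  constructor
  · intro h
    refine abs_le_of_forall_mul_le_abs_add_sq (b := 1 / (2 * α)) fun x => (h x).trans ?_
    rw [modifiedHuber_eq_abs_add_huber hα.ne' hεα.le]
    have hupper := huber_le_sq_div_two hβ x
    calc ε / α * |x| + huber (α - ε) x / α ≤ ε / α * |x| + x ^ 2 / 2 / α := by gcongr
      _ = ε / α * |x| + 1 / (2 * α) * x ^ 2 := by ring
  · intro hv x
    linarith [huber_div_le_modifiedHuber_sub_mul hα hεα.le hv x,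
      div_nonneg (huber_nonneg hβ x) hα.le]

theorem quadraticallySupportableAt_modifiedHuber_zero (hε : 0 ≤ ε) (hεα : ε < α) :
    QuadraticallySupportableAt (modifiedHuber α ε) 0 := by
  have hα : 0 < α := hε.trans_lt hεα
  have hβ : 0 < α - ε := sub_pos.2 hεα
  intro V _ hV
  obtain ⟨R, hR⟩ := hV.subset_closedBall 0
  set R' := max R (α - ε)
  have hR' : 0 < R' := hβ.trans_le (le_max_right _ _)
  refine ⟨(α - ε) / (α * R'), by positivity, fun v hv x hx => ?_⟩
  rw [subdifferential_modifiedHuber_zero hε hεα, mem_Icc, ← abs_le] at hv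
  have hxR : |x| ≤ R' := (mem_closedBall_zero_iff.1 (hR hx)).trans (le_max_left _ _)
  have hμ : (α - ε) / (α * R') / 2 * x ^ 2 = (α - ε) / (2 * R') * x ^ 2 / α := by
    field_simp
  rw [modifiedHuber_zero hεα.le, sub_zero, Real.norm_eq_abs, sq_abs, hμ]
  have hlower := div_le_div_of_nonneg_right (div_mul_sq_le_huber hβ (le_max_right R _) hxR) hα.le
  linarith [huber_div_le_modifiedHuber_sub_mul hα hεα.le hv x]

end ModifiedHuber

/-- For `0 < ε < α`, the modified Huber function `φ` is (i) convex on `ℝ`;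
(ii) its convex subdifferential at `0` is `[-ε/α, ε/α]`;
(iii) it is pointwise quadratically supportable at `0` on bounded sets; and
(iv) it is not strongly convex on `ℝ`. -/
theorem modifiedHuber_properties (α ε : ℝ) (hε : 0 < ε) (hεα : ε < α) :
    ConvexOn ℝ Set.univ (modifiedHuber α ε) ∧
    {v : ℝ | ∀ x : ℝ, modifiedHuber α ε 0 + v * (x - 0) ≤ modifiedHuber α ε x}
      = Set.Icc (-(ε / α)) (ε / α) ∧
    (∀ V ∈ nhds (0 : ℝ), Bornology.IsBounded V → ∃ μ : ℝ, 0 < μ ∧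
      ∀ v : ℝ, (∀ x : ℝ, modifiedHuber α ε 0 + v * (x - 0) ≤ modifiedHuber α ε x) →
        ∀ x ∈ V, modifiedHuber α ε 0 + v * (x - 0) + μ / 2 * ‖x - 0‖ ^ 2
          ≤ modifiedHuber α ε x) ∧
    ¬ ∃ μ : ℝ, 0 < μ ∧
        ConvexOn ℝ Set.univ (fun t : ℝ => modifiedHuber α ε t - μ / 2 * t ^ 2) := by
  refine ⟨convexOn_modifiedHuber hε.le hεα, subdifferential_modifiedHuber_zero hε.le hεα,
    quadraticallySupportableAt_modifiedHuber_zero hε.le hεα, ?_⟩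
  rintro ⟨μ, hμ, hconv⟩
  refine not_convexOn_Ioi_sub_sq_of_eq_affine (a := 1) (b := ε - (ε ^ 2 + α ^ 2) / (2 * α))
    (c := α - ε) hμ (fun t ht => ?_) (hconv.subset (subset_univ _) (convex_Ioi _))
  rw [modifiedHuber_of_sub_lt hεα.le ht, one_mul, add_sub_assoc]
end

section
/- The function ψ : ℝ → ℝ defined by ψ(t) = 1 − e^{−t²} is pointwise quadratically supportable at 0 on bounded sets (concretely: ψ(0) = 0, ψ′(0) = 0, and for every R > 0 there exists μ > 0 such that ψ(t) ≥ (μ/2)t² for all t with |t| ≤ R), but ψ is not convex on ℝ. -/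
/-!
`1 - e^{-s}` is at least `s / (1 + s)` because `e^s ≥ 1 + s`; with `s = t²` and
`t² ≤ R²` this gives the quadratic lower bound with `μ = 2 / (1 + R²)`. Convexity fails since
`ψ` is bounded by `1`: `ψ(2) = 1 - e^{-4} > 1/2 > (ψ(0) + ψ(4)) / 2`.
-/

open Real

lemma div_one_add_le_one_sub_exp_neg {s : ℝ} (hs : -1 < s) : s / (1 + s) ≤ 1 - exp (-s) := by
  have hpos : 0 < 1 + s := by linarith
  have hexp : exp (-s) ≤ (1 + s)⁻¹ := by
    rw [exp_neg]
    exact inv_anti₀ hpos (by linarith [add_one_le_exp s])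
  calc s / (1 + s) = 1 - (1 + s)⁻¹ := by field_simp; ring
    _ ≤ 1 - exp (-s) := by linarith

lemma sq_div_one_add_sq_le_one_sub_exp_neg_sq {R t : ℝ} (ht : |t| ≤ R) :
    t ^ 2 / (1 + R ^ 2) ≤ 1 - exp (-t ^ 2) := by
  have htR : t ^ 2 ≤ R ^ 2 := sq_le_sq' (abs_le.mp ht).1 (abs_le.mp ht).2
  calc t ^ 2 / (1 + R ^ 2) ≤ t ^ 2 / (1 + t ^ 2) :=
        div_le_div_of_nonneg_left (sq_nonneg t) (by positivity) (by linarith)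
    _ ≤ 1 - exp (-t ^ 2) := div_one_add_le_one_sub_exp_neg (by linarith [sq_nonneg t])

lemma hasDerivAt_one_sub_exp_neg_sq (t : ℝ) :
    HasDerivAt (fun t : ℝ => 1 - exp (-t ^ 2)) (2 * t * exp (-t ^ 2)) t := by
  refine ((hasDerivAt_pow 2 t).fun_neg.exp.const_sub 1).congr_deriv ?_
  push_cast
  ring

lemma not_convexOn_one_sub_exp_neg_sq : ¬ ConvexOn ℝ Set.univ (fun t : ℝ => 1 - exp (-t ^ 2)) := by
  intro h
  have hmid := h.2 (Set.mem_univ 0) (Set.mem_univ 4) (by norm_num : (0 : ℝ) ≤ 1 / 2)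
    (by norm_num : (0 : ℝ) ≤ 1 / 2) (by norm_num)
  norm_num at hmid
  have he4 : exp (-4) < 1 / 2 := by
    rw [exp_neg, inv_lt_comm₀ (exp_pos 4) (by norm_num)]
    linarith [add_one_le_exp 4]
  linarith [exp_pos (-16)]

/-- The function `ψ(t) = 1 - e^{-t²}` is pointwise quadratically supportable at `0` on bounded
sets: `ψ(0) = 0`, `ψ'(0) = 0`, and for every `R > 0` there is `μ > 0` with
`ψ(t) ≥ (μ/2) t²` whenever `|t| ≤ R`; yet `ψ` is not convex on `ℝ`. -/
theorem pqs_not_convex_example :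
    (fun t : ℝ => 1 - Real.exp (-t ^ 2)) 0 = 0 ∧
    HasDerivAt (fun t : ℝ => 1 - Real.exp (-t ^ 2)) 0 0 ∧
    (∀ R : ℝ, 0 < R → ∃ μ : ℝ, 0 < μ ∧
      ∀ t : ℝ, |t| ≤ R → μ / 2 * t ^ 2 ≤ 1 - Real.exp (-t ^ 2)) ∧
    ¬ ConvexOn ℝ Set.univ (fun t : ℝ => 1 - Real.exp (-t ^ 2)) := by
  refine ⟨by simp, by simpa using hasDerivAt_one_sub_exp_neg_sq 0, fun R _ => ?_,
    not_convexOn_one_sub_exp_neg_sq⟩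
  refine ⟨2 / (1 + R ^ 2), by positivity, fun t ht => ?_⟩
  calc 2 / (1 + R ^ 2) / 2 * t ^ 2 = t ^ 2 / (1 + R ^ 2) := by ring
    _ ≤ 1 - exp (-t ^ 2) := sq_div_one_add_sq_le_one_sub_exp_neg_sq ht
end

section
/- Let f : ℝⁿ → ℝ be differentiable with L_f-Lipschitz gradient, 𝒜 : ℝᵐ → ℝⁿ linear, g* : ℝᵐ → ℝ ∪ {+∞} proper convex, and K(x,y) = f(x) + ⟨x, 𝒜y⟩ − g*(y). Let σ, τ > 0 and G = σ⁻¹I_m − τ𝒜ᵀ𝒜 be positive semidefinite. Let (x̂, ŷ) be a saddle point of K, i.e., K(x̂, y) ≤ K(x̂, ŷ) ≤ K(x, ŷ) for all x ∈ ℝⁿ, y ∈ ℝᵐ, so that ∇f(x̂) + 𝒜ŷ = 0. Let (xᵏ, yᵏ) be sequences such that for every k ≥ 1 and all x ∈ ℝⁿ, y ∈ ℝᵐ: K(xᵏ, y) − K(x, yᵏ) ≤ (1/2)(‖yᵏ⁻¹ − y‖²_G − ‖yᵏ − y‖²_G − ‖yᵏ⁻¹ − yᵏ‖²_G) + (1/(2τ))(‖xᵏ⁻¹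 − x‖² − ‖xᵏ − x‖²) − (1/2)(1/τ − L_f)‖xᵏ − xᵏ⁻¹‖². Suppose further there exists μ > 0 such that f(xᵏ) ≥ f(x̂) + ⟨∇f(x̂), xᵏ − x̂⟩ + (μ/2)‖xᵏ − x̂‖² for all k. Then for every k ≥ 1: (μ/2)‖xᵏ − x̂‖² ≤ (1/2)(‖yᵏ⁻¹ − ŷ‖²_G − ‖yᵏ − ŷ‖²_G − ‖yᵏ⁻¹ − yᵏ‖²_G) + (1/(2τ))(‖xᵏ⁻¹ − x̂‖² − ‖xᵏ − x̂‖²) − (1/2)(1/τ − L_f)‖xᵏ − xᵏ⁻¹‖². -/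
open scoped RealInnerProductSpace

/-- Lemma 3.2 of the paper. Let `K(x,y) = f(x) + ⟪x, 𝒜y⟫ - g*(y)` with `f` differentiable
with `L_f`-Lipschitz gradient and `g*` proper convex. Let `G = σ⁻¹ I - τ 𝒜ᵀ𝒜 ⪰ 0`, let
`(x̂, ŷ)` be a saddle point of `K` (so `∇f(x̂) + 𝒜ŷ = 0`), and suppose the basic PAPC
inequality (Lemma 3.1) holds for all `k ≥ 1` and all `(x, y)`. If additionally
`f(xᵏ) ≥ f(x̂) + ⟪∇f(x̂), xᵏ - x̂⟫ + (μ/2)‖xᵏ - x̂‖²` for all `k` with some `μ > 0`, then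
for every `k ≥ 1`,
`(μ/2)‖xᵏ - x̂‖² ≤ (1/2)(‖yᵏ⁻¹-ŷ‖²_G - ‖yᵏ-ŷ‖²_G - ‖yᵏ⁻¹-yᵏ‖²_G)
 + (1/(2τ))(‖xᵏ⁻¹-x̂‖² - ‖xᵏ-x̂‖²) - (1/2)(1/τ - L_f)‖xᵏ-xᵏ⁻¹‖²`. -/
theorem papc_key_estimate {n m : ℕ}
    (f : EuclideanSpace ℝ (Fin n) → ℝ)
    (f' : EuclideanSpace ℝ (Fin n) → EuclideanSpace ℝ (Fin n))
    (hdiff : ∀ x, HasGradientAt f (f' x) x)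
    (Lf : ℝ) (hLip : ∀ a b, ‖f' a - f' b‖ ≤ Lf * ‖a - b‖)
    (A : EuclideanSpace ℝ (Fin m) →L[ℝ] EuclideanSpace ℝ (Fin n))
    (gstar : EuclideanSpace ℝ (Fin m) → EReal)
    (hproper_bot : ∀ y, gstar y ≠ ⊥) (hproper_top : ∃ y, gstar y ≠ ⊤)
    (hgconv : ∀ y₁ y₂ : EuclideanSpace ℝ (Fin m), ∀ t : ℝ, 0 < t → t < 1 →
      gstar (t • y₁ + (1 - t) • y₂) ≤ ((t : EReal) * gstar y₁ + ((1 - t : ℝ) : EReal) * gstar y₂))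
    (K : EuclideanSpace ℝ (Fin n) → EuclideanSpace ℝ (Fin m) → EReal)
    (hK : ∀ x y, K x y = ((f x + ⟪x, A y⟫ : ℝ) : EReal) - gstar y)
    (σ τ : ℝ) (hσ : 0 < σ) (hτ : 0 < τ)
    (G : EuclideanSpace ℝ (Fin m) →L[ℝ] EuclideanSpace ℝ (Fin m))
    (hG : G = σ⁻¹ • ContinuousLinearMap.id ℝ (EuclideanSpace ℝ (Fin m)) -
      τ • ((ContinuousLinearMap.adjoint A).comp A))
    (hGpsd : ∀ z, 0 ≤ ⟪z, G z⟫)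
    (xhat : EuclideanSpace ℝ (Fin n)) (yhat : EuclideanSpace ℝ (Fin m))
    (hsaddle : ∀ x y, K xhat y ≤ K xhat yhat ∧ K xhat yhat ≤ K x yhat)
    (hopt : f' xhat + A yhat = 0)
    (x : ℕ → EuclideanSpace ℝ (Fin n)) (y : ℕ → EuclideanSpace ℝ (Fin m))
    (hbasic : ∀ k : ℕ, 1 ≤ k → ∀ (x' : EuclideanSpace ℝ (Fin n))
      (y' : EuclideanSpace ℝ (Fin m)),
      K (x k) y' - K x' (y k) ≤
        (((1 / 2) * (⟪y (k - 1) - y', G (y (k - 1) - y')⟫ - ⟪y k - y', G (y k - y')⟫ -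
            ⟪y (k - 1) - y k, G (y (k - 1) - y k)⟫) +
          (1 / (2 * τ)) * (‖x (k - 1) - x'‖ ^ 2 - ‖x k - x'‖ ^ 2) -
          (1 / 2) * (1 / τ - Lf) * ‖x k - x (k - 1)‖ ^ 2 : ℝ) : EReal))
    (μ : ℝ) (hμ : 0 < μ)
    (hpqs : ∀ k : ℕ,
      f xhat + ⟪f' xhat, x k - xhat⟫ + μ / 2 * ‖x k - xhat‖ ^ 2 ≤ f (x k)) :
    ∀ k : ℕ, 1 ≤ k →
      μ / 2 * ‖x k - xhat‖ ^ 2 ≤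
        (1 / 2) * (⟪y (k - 1) - yhat, G (y (k - 1) - yhat)⟫ - ⟪y k - yhat, G (y k - yhat)⟫ -
            ⟪y (k - 1) - y k, G (y (k - 1) - y k)⟫) +
          (1 / (2 * τ)) * (‖x (k - 1) - xhat‖ ^ 2 - ‖x k - xhat‖ ^ 2) -
          (1 / 2) * (1 / τ - Lf) * ‖x k - x (k - 1)‖ ^ 2 := by
  intro k hk
  -- gstar yhat ≠ ⊤
  have htop : gstar yhat ≠ ⊤ := by
    intro h
    obtain ⟨y₀, hy₀⟩ := hproper_top
    apply hy₀
    have h1 := (hsaddle xhat y₀).1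
    rw [hK, hK, h] at h1
    have hbot : ((f xhat + ⟪xhat, A yhat⟫ : ℝ) : EReal) - ⊤ = ⊥ := by
      rw [sub_eq_add_neg]; simp [EReal.add_bot]
    rw [hbot, le_bot_iff] at h1
    by_contra hy₀top
    lift gstar y₀ to ℝ using ⟨hy₀top, hproper_bot y₀⟩ with r hr
    rw [← EReal.coe_sub] at h1
    exact EReal.coe_ne_bot _ h1
  lift gstar yhat to ℝ using ⟨htop, hproper_bot yhat⟩ with r hr
  have hKxk : K (x k) yhat = ((f (x k) + ⟪x k, A yhat⟫ - r : ℝ) : EReal) := by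
    rw [hK, ← hr, EReal.coe_sub]
  have hKhat : K xhat yhat = ((f xhat + ⟪xhat, A yhat⟫ - r : ℝ) : EReal) := by
    rw [hK, ← hr, EReal.coe_sub]
  have h2 : K xhat (y k) ≤ ((f xhat + ⟪xhat, A yhat⟫ - r : ℝ) : EReal) := by
    rw [← hKhat]; exact (hsaddle (x k) (y k)).1
  have h3 : (((f (x k) + ⟪x k, A yhat⟫ - r) - (f xhat + ⟪xhat, A yhat⟫ - r) : ℝ) : EReal) ≤
      K (x k) yhat - K xhat (y k) := by
    rw [EReal.coe_sub, hKxk]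
    exact EReal.sub_le_sub le_rfl h2
  have hf' : f' xhat = -(A yhat) := eq_neg_of_add_eq_zero_left hopt
  have hlb : μ / 2 * ‖x k - xhat‖ ^ 2 ≤
      (f (x k) + ⟪x k, A yhat⟫ - r) - (f xhat + ⟪xhat, A yhat⟫ - r) := by
    have hp := hpqs k
    have hin : ⟪f' xhat, x k - xhat⟫ = -⟪A yhat, x k - xhat⟫ := by
      rw [hf', inner_neg_left]
    have hin2 : ⟪x k, A yhat⟫ - ⟪xhat, A yhat⟫ = ⟪A yhat, x k - xhat⟫ := by
      rw [inner_sub_right, real_inner_comm (A yhat) (x k), real_inner_comm (A yhat) xhat]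
    linarith [hp, hin ▸ hp]
  have h4 := hbasic k hk xhat yhat
  have h5 : ((μ / 2 * ‖x k - xhat‖ ^ 2 : ℝ) : EReal) ≤
      (((1 / 2) * (⟪y (k - 1) - yhat, G (y (k - 1) - yhat)⟫ - ⟪y k - yhat, G (y k - yhat)⟫ -
          ⟪y (k - 1) - y k, G (y (k - 1) - y k)⟫) +
        (1 / (2 * τ)) * (‖x (k - 1) - xhat‖ ^ 2 - ‖x k - xhat‖ ^ 2) -
        (1 / 2) * (1 / τ - Lf) * ‖x k - x (k - 1)‖ ^ 2 : ℝ) : EReal) :=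
    le_trans (le_trans (EReal.coe_le_coe_iff.mpr hlb) h3) h4
  exact_mod_cast h5
end

section
/- Let f : ℝⁿ → ℝ be convex, differentiable with L_f-Lipschitz gradient, let 𝒜 : ℝᵐ → ℝⁿ be linear with λ_min(𝒜ᵀ𝒜) > 0 (full rank), and choose τ ∈ (0, 1/L_f) and σ > 0 with 0 < τσ ≤ 1/‖𝒜ᵀ𝒜‖, so that G = σ⁻¹I_m − τ𝒜ᵀ𝒜 ⪰ 0. Let (x̂, ŷ) satisfy ∇f(x̂) + 𝒜ŷ = 0 and let sequences (xᵏ) and (yᵏ) satisfy the PAPC update xᵏ = xᵏ⁻¹ − τ(∇f(xᵏ⁻¹) + 𝒜yᵏ) for all k ≥ 1. Suppose μ > 0 is such that for every k ≥ 1: (μ/2)‖xᵏ − x̂‖² ≤ (1/2)(‖yᵏ⁻¹ − ŷ‖²_G − ‖yᵏ − ŷ‖²_G − ‖yᵏ⁻¹ − yᵏ‖²_G) + (1/(2τ))(‖xᵏ⁻¹ − x̂‖² − ‖xᵏ − x̂‖²) − (1/2)(1/τ − L_f)‖xᵏ − xᵏ⁻¹‖². Then for every α > 1, setting δ = min{ (α−1)τσ(1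 − τL_f)λ_min(𝒜ᵀ𝒜)/α, μτσλ_min(𝒜ᵀ𝒜)/(ατL_f² + σλ_min(𝒜ᵀ𝒜)) }, δ is strictly positive and for all k ≥ 1: ‖uᵏ − û‖²_H ≤ (1/(1+δ))‖uᵏ⁻¹ − û‖²_H, where uᵏ = (xᵏ, yᵏ), û = (x̂, ŷ), and ‖(x,y)‖²_H = (1/τ)‖x‖² + ‖y‖²_G. -/
/-!
Write `h = ∇f(xᵏ⁻¹) + 𝒜yᵏ = (xᵏ⁻¹ - xᵏ) / τ` and `g = ∇f(xᵏ⁻¹) - ∇f(x̂)`, so that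
`𝒜(yᵏ - ŷ) = h - g`. Cocoercivity of `∇f` (`‖g‖² ≤ L_f ⟪g, xᵏ⁻¹ - x̂⟫`, from convexity and the
descent lemma) and a sum-of-squares identity bound `‖𝒜(yᵏ - ŷ)‖²` by
`α L_f² ‖xᵏ - x̂‖² + α/(α-1) ‖h‖²`, while full rank gives `σ λ_min ‖yᵏ - ŷ‖²_G ≤ ‖𝒜(yᵏ - ŷ)‖²`.
With this choice of `δ`, `δ ‖uᵏ - û‖²_H` is then at most `μ ‖xᵏ - x̂‖² + (1/τ - L_f) ‖xᵏ - xᵏ⁻¹‖²`,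
which the key estimate (dropping `‖yᵏ⁻¹ - yᵏ‖²_G ≥ 0`) bounds by `‖uᵏ⁻¹ - û‖²_H - ‖uᵏ - û‖²_H`.
-/

open scoped RealInnerProductSpace
open Set

section InnerProduct

variable {E : Type*} [NormedAddCommGroup E] [InnerProductSpace ℝ E]

theorem norm_sub_sq_le_of_sq_norm_le_inner {α L t : ℝ} (hα : 1 < α) (ht₀ : 0 ≤ t) (ht₂ : t ≤ 2)
    {g u h : E} (hg : ‖g‖ ^ 2 ≤ L * ⟪g, u⟫ + t * ⟪g, h⟫) :
    ‖h - g‖ ^ 2 ≤ α * L ^ 2 * ‖u‖ ^ 2 + α / (α - 1) * ‖h‖ ^ 2 := by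
  have hα₀ : 0 < α := by linarith
  have hα₁ : 0 < α - 1 := by linarith
  set D := 1 + α * (α - 1) * t ^ 2
  have hD : 0 < D := by positivity
  -- `lam` maximizes the coefficient `lam - 1 - lam ^ 2 / (4 * α) - (α - 1) * (2 - lam * t) ^ 2 / 4`
  -- of `‖g‖ ^ 2` left over after completing both squares; the maximum is `α (α - 1) t (2 - t) / D`.
  set lam := 2 * α * (1 + (α - 1) * t) / D
  have hlam : 0 ≤ lam := by positivity
  have hsos : α * L ^ 2 * ‖u‖ ^ 2 + α / (α - 1) * ‖h‖ ^ 2 - ‖h - g‖ ^ 2 =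
      lam * (L * ⟪g, u⟫ + t * ⟪g, h⟫ - ‖g‖ ^ 2) + ‖(α * L) • u - (lam / 2) • g‖ ^ 2 / α +
        ‖h + ((α - 1) * (2 - lam * t) / 2) • g‖ ^ 2 / (α - 1) +
        α * (α - 1) * t * (2 - t) / D * ‖g‖ ^ 2 := by
    simp only [norm_sub_sq_real, norm_add_sq_real, norm_smul, real_inner_smul_left,
      real_inner_smul_right, Real.norm_eq_abs, mul_pow, sq_abs, real_inner_comm u g,
      real_inner_comm h g, lam]
    field_simp
    ring
  have hκ : 0 ≤ α * (α - 1) * t * (2 - t) / D * ‖g‖ ^ 2 := by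
    have : 0 ≤ 2 - t := by linarith
    positivity
  have hslack := mul_nonneg hlam (sub_nonneg.2 hg)
  have hsq₁ : 0 ≤ ‖(α * L) • u - (lam / 2) • g‖ ^ 2 / α := by positivity
  have hsq₂ : 0 ≤ ‖h + ((α - 1) * (2 - lam * t) / 2) • g‖ ^ 2 / (α - 1) := by positivity
  linarith

theorem sq_norm_sub_le_of_forward_step {f' : E → E} {L τ α : ℝ} (hα : 1 < α) (hτ : τ ≠ 0)
    (hτL₀ : 0 ≤ τ * L) (hτL₂ : τ * L ≤ 2) {x₀ x₁ xhat v vhat : E}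
    (hco : ‖f' x₀ - f' xhat‖ ^ 2 ≤ L * ⟪f' x₀ - f' xhat, x₀ - xhat⟫)
    (hopt : f' xhat + vhat = 0) (hstep : x₁ = x₀ - τ • (f' x₀ + v)) :
    ‖v - vhat‖ ^ 2 ≤ α * L ^ 2 * ‖x₁ - xhat‖ ^ 2 + α / ((α - 1) * τ ^ 2) * ‖x₁ - x₀‖ ^ 2 := by
  set h := f' x₀ + v
  set g := f' x₀ - f' xhat
  have hg : ‖g‖ ^ 2 ≤ L * ⟪g, x₁ - xhat⟫ + τ * L * ⟪g, h⟫ := by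
    have hx : x₀ - xhat = (x₁ - xhat) + τ • h := by rw [hstep]; abel
    rwa [hx, inner_add_right, real_inner_smul_right, mul_add, ← mul_assoc, mul_comm L τ] at hco
  have hv : v - vhat = h - g := by
    rw [← neg_eq_of_add_eq_zero_right hopt]; simp only [h, g]; abel
  have hh : ‖x₁ - x₀‖ ^ 2 = τ ^ 2 * ‖h‖ ^ 2 := by
    rw [hstep, sub_sub_cancel_left, norm_neg, norm_smul, mul_pow, Real.norm_eq_abs, sq_abs]
  have hcoef : α / ((α - 1) * τ ^ 2) * (τ ^ 2 * ‖h‖ ^ 2) = α / (α - 1) * ‖h‖ ^ 2 := by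
    field_simp
  rw [hv, hh, hcoef]
  exact norm_sub_sq_le_of_sq_norm_le_inner hα hτL₀ hτL₂ hg

end InnerProduct

section Gradient

variable {E : Type*} [NormedAddCommGroup E] [InnerProductSpace ℝ E] [CompleteSpace E]
  {f : E → ℝ} {f' : E → E} {L : ℝ}

theorem HasGradientAt.hasDerivAt_comp_add_smul {g a d : E} {θ : ℝ}
    (hf : HasGradientAt f g (a + θ • d)) :
    HasDerivAt (fun s : ℝ => f (a + s • d)) ⟪g, d⟫ θ := by
  have hline : HasDerivAt (fun s : ℝ => a + s • d) d θ := by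
    simpa using ((hasDerivAt_id θ).smul_const d).const_add a
  have h := hf.hasFDerivAt.comp_hasDerivAt θ hline
  simp only [Function.comp_def, InnerProductSpace.toDual_apply_apply] at h
  exact h

theorem ConvexOn.add_inner_gradient_le (hconv : ConvexOn ℝ univ f) {g a : E}
    (hf : HasGradientAt f g a) (b : E) : f a + ⟪g, b - a⟫ ≤ f b := by
  have hline : ConvexOn ℝ univ (fun s : ℝ => f (a + s • (b - a))) := by
    have h := hconv.comp_affineMap (AffineMap.lineMap a b)
    simp only [preimage_univ, Function.comp_def, AffineMap.lineMap_apply_module'] at h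
    simpa only [add_comm] using h
  have hslope := hline.le_slope_of_hasDerivAt (mem_univ 0) (mem_univ 1) one_pos
    (HasGradientAt.hasDerivAt_comp_add_smul (by simpa using hf))
  simp only [slope_def_field, one_smul, add_sub_cancel, zero_smul, add_zero, sub_zero,
    div_one] at hslope
  linarith

theorem le_add_inner_gradient_add_sq_norm (hf : ∀ x, HasGradientAt f (f' x) x)
    (hLip : ∀ a b, ‖f' a - f' b‖ ≤ L * ‖a - b‖) (a b : E) :
    f b ≤ f a + ⟪f' a, b - a⟫ + L / 2 * ‖b - a‖ ^ 2 := by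
  set d := b - a
  set ψ : ℝ → ℝ := fun θ => f (a + θ • d) - θ * ⟪f' a, d⟫ - L / 2 * ‖d‖ ^ 2 * θ ^ 2
  have hψ : ∀ θ, HasDerivAt ψ (⟪f' (a + θ • d) - f' a, d⟫ - L * ‖d‖ ^ 2 * θ) θ := by
    intro θ
    refine ((((hf _).hasDerivAt_comp_add_smul).sub ((hasDerivAt_id θ).mul_const _)).sub
      ((hasDerivAt_pow 2 θ).const_mul (L / 2 * ‖d‖ ^ 2))).congr_deriv ?_
    rw [inner_sub_left]
    simp only [one_mul, Nat.cast_ofNat, Nat.add_one_sub_one, pow_one, sub_right_inj]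
    ring
  have hanti : AntitoneOn ψ (Icc 0 1) := by
    refine antitoneOn_of_hasDerivWithinAt_nonpos (convex_Icc 0 1)
      (fun θ _ => (hψ θ).continuousAt.continuousWithinAt)
      (fun θ _ => (hψ θ).hasDerivWithinAt) fun θ hθ => ?_
    rw [interior_Icc] at hθ
    have : ⟪f' (a + θ • d) - f' a, d⟫ ≤ L * θ * ‖d‖ ^ 2 :=
      calc ⟪f' (a + θ • d) - f' a, d⟫ ≤ ‖f' (a + θ • d) - f' a‖ * ‖d‖ := real_inner_le_norm _ _
        _ ≤ L * ‖a + θ • d - a‖ * ‖d‖ := by gcongr; exact hLip _ _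
        _ = L * θ * ‖d‖ ^ 2 := by
          rw [add_sub_cancel_left, norm_smul, Real.norm_of_nonneg hθ.1.le]; ring
    linarith
  have := hanti (left_mem_Icc.2 zero_le_one) (right_mem_Icc.2 zero_le_one) zero_le_one
  simp only [ψ, d, zero_smul, add_zero, one_smul, add_sub_cancel, zero_mul, one_mul, sub_zero,
    mul_zero, one_pow, mul_one, ne_eq, OfNat.ofNat_ne_zero, not_false_eq_true, zero_pow] at this
  linarith

theorem add_inner_gradient_add_sq_norm_sub_le (hconv : ConvexOn ℝ univ f)
    (hf : ∀ x, HasGradientAt f (f' x) x) (hL : 0 < L)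
    (hLip : ∀ a b, ‖f' a - f' b‖ ≤ L * ‖a - b‖) (p q : E) :
    f q + ⟪f' q, p - q⟫ + 1 / (2 * L) * ‖f' p - f' q‖ ^ 2 ≤ f p := by
  set D := f' p - f' q
  -- `z` maximizes the lower bound `⟪f' q, z - q⟫ - ⟪f' p, z - p⟫ - L / 2 * ‖z - p‖ ^ 2`
  -- on `f p - f q` obtained from `hlow` and `hup`.
  set z := p - L⁻¹ • D
  have hlow := hconv.add_inner_gradient_le (hf q) z
  have hup := le_add_inner_gradient_add_sq_norm hf hLip p z
  have hzp : z - p = -(L⁻¹ • D) := by simp [z]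
  have hzq : z - q = (p - q) - L⁻¹ • D := by simp only [z]; abel
  rw [hzq, inner_sub_right, real_inner_smul_right] at hlow
  rw [hzp, inner_neg_right, real_inner_smul_right, norm_neg, norm_smul, Real.norm_eq_abs,
    mul_pow, sq_abs] at hup
  have hD : ⟪f' p, D⟫ - ⟪f' q, D⟫ = ‖D‖ ^ 2 := by
    rw [← inner_sub_left, real_inner_self_eq_norm_sq]
  field_simp at hlow hup ⊢
  linarith

theorem sq_norm_gradient_sub_le_inner (hconv : ConvexOn ℝ univ f)
    (hf : ∀ x, HasGradientAt f (f' x) x) (hL : 0 < L)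
    (hLip : ∀ a b, ‖f' a - f' b‖ ≤ L * ‖a - b‖) (p q : E) :
    ‖f' p - f' q‖ ^ 2 ≤ L * ⟪f' p - f' q, p - q⟫ := by
  have hpq := add_inner_gradient_add_sq_norm_sub_le hconv hf hL hLip p q
  have hqp := add_inner_gradient_add_sq_norm_sub_le hconv hf hL hLip q p
  rw [norm_sub_rev, ← neg_sub p q, inner_neg_right] at hqp
  rw [inner_sub_left]
  field_simp at hpq hqp ⊢
  linarith

end Gradient

section Preconditioner

variable {E F : Type*} [NormedAddCommGroup E] [InnerProductSpace ℝ E] [CompleteSpace E]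
  [NormedAddCommGroup F] [InnerProductSpace ℝ F] [CompleteSpace F]

open ContinuousLinearMap in
theorem inner_smul_id_sub_smul_adjoint_comp_self_apply (A : F →L[ℝ] E) (c τ : ℝ) (z : F) :
    ⟪z, (c • ContinuousLinearMap.id ℝ F - τ • ((adjoint A).comp A)) z⟫ =
      c * ‖z‖ ^ 2 - τ * ‖A z‖ ^ 2 := by
  simp only [sub_apply, smul_apply, id_apply, comp_apply, inner_sub_right,
    real_inner_smul_right, adjoint_inner_right, real_inner_self_eq_norm_sq]

open ContinuousLinearMap in
theorem inner_smul_id_sub_smul_adjoint_comp_self_apply_nonneg (A : F →L[ℝ] E) {τ σ : ℝ}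
    (hτ : 0 ≤ τ) (hσ : 0 < σ) (hτσ : τ * σ ≤ 1 / ‖(adjoint A).comp A‖) (z : F) :
    0 ≤ ⟪z, (σ⁻¹ • ContinuousLinearMap.id ℝ F - τ • ((adjoint A).comp A)) z⟫ := by
  have hAA : τ * ‖A‖ ^ 2 ≤ σ⁻¹ := by
    rw [norm_adjoint_comp_self, ← sq] at hτσ
    rcases (sq_nonneg ‖A‖).eq_or_lt with h | h
    · rw [← h]; simp [hσ.le]
    · rw [le_div_iff₀ h] at hτσ
      rw [inv_eq_one_div, le_div_iff₀ hσ]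
      linarith
  have hAz : τ * ‖A z‖ ^ 2 ≤ σ⁻¹ * ‖z‖ ^ 2 :=
    calc τ * ‖A z‖ ^ 2 ≤ τ * (‖A‖ ^ 2 * ‖z‖ ^ 2) := by
          rw [← mul_pow]; gcongr; exact A.le_opNorm z
      _ ≤ σ⁻¹ * ‖z‖ ^ 2 := by rw [← mul_assoc]; gcongr
  rw [inner_smul_id_sub_smul_adjoint_comp_self_apply]
  linarith

open ContinuousLinearMap in
theorem mul_inner_smul_id_sub_smul_adjoint_comp_self_apply_le (A : F →L[ℝ] E) {τ σ l : ℝ}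
    (hτ : 0 ≤ τ) (hσ : 0 < σ) (hl : 0 ≤ l) {z : F} (hz : l * ‖z‖ ^ 2 ≤ ‖A z‖ ^ 2) :
    σ * l * ⟪z, (σ⁻¹ • ContinuousLinearMap.id ℝ F - τ • ((adjoint A).comp A)) z⟫ ≤
      ‖A z‖ ^ 2 := by
  have hcancel : σ * l * σ⁻¹ = l := by field_simp
  have := mul_nonneg (mul_nonneg (mul_nonneg hσ.le hl) hτ) (sq_nonneg ‖A z‖)
  rw [inner_smul_id_sub_smul_adjoint_comp_self_apply, mul_sub, ← mul_assoc, hcancel]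
  linarith

end Preconditioner

theorem le_one_div_one_add_mul_of_descent {τ σ lam μ L α δ X X₀ Y Y₀ P : ℝ} (hτ : 0 < τ)
    (hσ : 0 < σ) (hlam : 0 < lam) (hα : 1 < α) (hδ : 0 ≤ δ)
    (hδ₁ : δ ≤ (α - 1) * τ * σ * (1 - τ * L) * lam / α)
    (hδ₂ : δ ≤ μ * τ * σ * lam / (α * τ * L ^ 2 + σ * lam)) (hX : 0 ≤ X) (hP : 0 ≤ P)
    (hdecr : 1 / τ * X + Y + μ * X + (1 / τ - L) * P ≤ 1 / τ * X₀ + Y₀)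
    (hY : σ * lam * Y ≤ α * L ^ 2 * X + α / ((α - 1) * τ ^ 2) * P) :
    1 / τ * X + Y ≤ 1 / (1 + δ) * (1 / τ * X₀ + Y₀) := by
  have hα₁ : 0 < α - 1 := by linarith
  have hσlam : 0 < σ * lam := mul_pos hσ hlam
  have hδX : δ * (1 / τ + α * L ^ 2 / (σ * lam)) ≤ μ := by
    rw [le_div_iff₀ (by positivity)] at hδ₂
    field_simp
    linarith
  have hδP : δ * (α / ((α - 1) * τ ^ 2 * (σ * lam))) ≤ 1 / τ - L := by
    rw [le_div_iff₀ (by positivity)] at hδ₁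
    field_simp
    linarith
  have hYδ : δ * Y ≤ δ * ((α * L ^ 2 * X + α / ((α - 1) * τ ^ 2) * P) / (σ * lam)) := by
    gcongr
    rwa [le_div_iff₀ hσlam, mul_comm]
  have hgain : δ * (1 / τ * X + Y) ≤ μ * X + (1 / τ - L) * P := by
    calc δ * (1 / τ * X + Y)
        ≤ δ * (1 / τ + α * L ^ 2 / (σ * lam)) * X +
            δ * (α / ((α - 1) * τ ^ 2 * (σ * lam))) * P := by
          convert add_le_add_left hYδ (δ * (1 / τ * X)) using 1 <;> field_simp <;> ring
      _ ≤ μ * X + (1 / τ - L) * P := by gcongr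
  have hδ' : 0 < 1 + δ := by linarith
  calc 1 / τ * X + Y = 1 / (1 + δ) * (1 / τ * X + Y + δ * (1 / τ * X + Y)) := by field_simp
    _ ≤ 1 / (1 + δ) * (1 / τ * X₀ + Y₀) :=
      mul_le_mul_of_nonneg_left (by linarith) (by positivity)

/-- Theorem 3.1 (Q-linear rate) of the paper. Under Lipschitz smoothness of `f`, full rank of
`𝒜` (smallest eigenvalue `λmin` of `𝒜ᵀ𝒜` positive), step sizes `τ ∈ (0, 1/L_f)`, `σ > 0`
with `τσ ≤ 1/‖𝒜ᵀ𝒜‖`, the PAPC primal update, the optimality condition `∇f(x̂) + 𝒜ŷ = 0`,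
and the key estimate with constant `μ > 0`, for every `α > 1` the quantity
`δ = min{(α-1)τσ(1-τL_f)λmin/α, μτσλmin/(ατL_f² + σλmin)}` is positive and
`‖uᵏ - û‖²_H ≤ (1/(1+δ))‖uᵏ⁻¹ - û‖²_H` for all `k ≥ 1`, where
`‖(x,y)‖²_H = (1/τ)‖x‖² + ‖y‖²_G` and `G = σ⁻¹ I - τ 𝒜ᵀ𝒜`. -/
theorem papc_q_linear_rate {n m : ℕ}
    (f : EuclideanSpace ℝ (Fin n) → ℝ)
    (hconv : ConvexOn ℝ Set.univ f)
    (f' : EuclideanSpace ℝ (Fin n) → EuclideanSpace ℝ (Fin n))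
    (hdiff : ∀ x, HasGradientAt f (f' x) x)
    (Lf : ℝ) (hLf : 0 < Lf) (hLip : ∀ a b, ‖f' a - f' b‖ ≤ Lf * ‖a - b‖)
    (A : EuclideanSpace ℝ (Fin m) →L[ℝ] EuclideanSpace ℝ (Fin n))
    (lammin : ℝ) (hlammin_pos : 0 < lammin)
    (hlammin : IsGreatest {c : ℝ | ∀ z, c * ‖z‖ ^ 2 ≤ ‖A z‖ ^ 2} lammin)
    (τ σ : ℝ) (hτ : 0 < τ) (hτLf : τ < 1 / Lf) (hσ : 0 < σ)
    (hτσ : τ * σ ≤ 1 / ‖(ContinuousLinearMap.adjoint A).comp A‖)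
    (G : EuclideanSpace ℝ (Fin m) →L[ℝ] EuclideanSpace ℝ (Fin m))
    (hG : G = σ⁻¹ • ContinuousLinearMap.id ℝ (EuclideanSpace ℝ (Fin m)) -
      τ • ((ContinuousLinearMap.adjoint A).comp A))
    (xhat : EuclideanSpace ℝ (Fin n)) (yhat : EuclideanSpace ℝ (Fin m))
    (hopt : f' xhat + A yhat = 0)
    (x : ℕ → EuclideanSpace ℝ (Fin n)) (y : ℕ → EuclideanSpace ℝ (Fin m))
    (hupdate : ∀ k : ℕ, 1 ≤ k → x k = x (k - 1) - τ • (f' (x (k - 1)) + A (y k)))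
    (μ : ℝ) (hμ : 0 < μ)
    (hkey : ∀ k : ℕ, 1 ≤ k →
      μ / 2 * ‖x k - xhat‖ ^ 2 ≤
        (1 / 2) * (⟪y (k - 1) - yhat, G (y (k - 1) - yhat)⟫ - ⟪y k - yhat, G (y k - yhat)⟫ -
            ⟪y (k - 1) - y k, G (y (k - 1) - y k)⟫) +
          (1 / (2 * τ)) * (‖x (k - 1) - xhat‖ ^ 2 - ‖x k - xhat‖ ^ 2) -
          (1 / 2) * (1 / τ - Lf) * ‖x k - x (k - 1)‖ ^ 2) :
    ∀ α : ℝ, 1 < α →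
      0 < min ((α - 1) * τ * σ * (1 - τ * Lf) * lammin / α)
          (μ * τ * σ * lammin / (α * τ * Lf ^ 2 + σ * lammin)) ∧
      ∀ k : ℕ, 1 ≤ k →
        (1 / τ) * ‖x k - xhat‖ ^ 2 + ⟪y k - yhat, G (y k - yhat)⟫ ≤
          (1 / (1 + min ((α - 1) * τ * σ * (1 - τ * Lf) * lammin / α)
            (μ * τ * σ * lammin / (α * τ * Lf ^ 2 + σ * lammin)))) *
          ((1 / τ) * ‖x (k - 1) - xhat‖ ^ 2 +
            ⟪y (k - 1) - yhat, G (y (k - 1) - yhat)⟫) := by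
  intro α hα
  have hα₁ : 0 < α - 1 := sub_pos.2 hα
  have hτLf' : 0 < 1 - τ * Lf := by rw [lt_div_iff₀ hLf] at hτLf; linarith
  set δ := min ((α - 1) * τ * σ * (1 - τ * Lf) * lammin / α)
    (μ * τ * σ * lammin / (α * τ * Lf ^ 2 + σ * lammin))
  have hδ : 0 < δ := lt_min (by positivity) (by positivity)
  refine ⟨hδ, fun k hk => ?_⟩
  have hG₀ := hG ▸ inner_smul_id_sub_smul_adjoint_comp_self_apply_nonneg A hτ.le hσ hτσ
    (y (k - 1) - y k)
  have hG₁ := hG ▸ mul_inner_smul_id_sub_smul_adjoint_comp_self_apply_le A hτ.le hσ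
    hlammin_pos.le (hlammin.1 (y k - yhat))
  have hdual := sq_norm_sub_le_of_forward_step hα hτ.ne' (by positivity) (by linarith)
    (sq_norm_gradient_sub_le_inner hconv hdiff hLf hLip _ _) hopt (hupdate k hk)
  rw [← map_sub] at hdual
  refine le_one_div_one_add_mul_of_descent hτ hσ hlammin_pos hα hδ.le (min_le_left _ _)
    (min_le_right _ _) (sq_nonneg _) (sq_nonneg _) ?_ (hG₁.trans hdual)
  have h2τ : 1 / (2 * τ) = 1 / 2 * (1 / τ) := by ring
  have hkeyk := hkey k hk
  rw [h2τ] at hkeyk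
  linarith
end

section
/- Let S be a nonempty set of points in ℝⁿ × ℝᵐ (the set of saddle points), let ‖·‖_H be the seminorm ‖(x,y)‖²_H = (1/τ)‖x‖² + ‖y‖²_G with τ > 0 and G ⪰ 0, and let (uᵏ) = (xᵏ, yᵏ) be a sequence in ℝⁿ × ℝᵐ converging (in the Euclidean norm) to a point ū = (x̄, ȳ) ∈ S. Suppose that for every û ∈ S there exists δ > 0 such that ‖uᵏ − û‖²_H ≤ (1/(1+δ))‖uᵏ⁻¹ − û‖²_H for all k ≥ 1. Then ‖û − ū‖_H = 0 for every û ∈ S; in particular, since the H-seminorm is a norm in the primal component, every û = (x̂, ŷ) ∈ S has x̂ = x̄, i.e., the set of primal solutions X* = {x̂ : (x̂, ŷ) ∈ S for some ŷ} is the singleton {x̄}. -/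
open scoped RealInnerProductSpace

/-- Corollary 3.1 (unique saddle point), abstracted. Let `S` be a nonempty set of saddle
points, `‖(x,y)‖²_H = (1/τ)‖x‖² + ‖y‖²_G` with `τ > 0` and `G ⪰ 0`, and let `(uᵏ)` converge
to `ū ∈ S`. If for every `û ∈ S` there is `δ > 0` with
`‖uᵏ - û‖²_H ≤ (1/(1+δ))‖uᵏ⁻¹ - û‖²_H` for all `k ≥ 1`, then `‖û - ū‖_H = 0` for every
`û ∈ S`; in particular every `û = (x̂, ŷ) ∈ S` has `x̂ = x̄`, i.e. the primal solution set
is the singleton `{x̄}`. -/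
theorem unique_saddle_point {n m : ℕ}
    (S : Set (EuclideanSpace ℝ (Fin n) × EuclideanSpace ℝ (Fin m))) (hS : S.Nonempty)
    (τ : ℝ) (hτ : 0 < τ)
    (G : EuclideanSpace ℝ (Fin m) →L[ℝ] EuclideanSpace ℝ (Fin m))
    (hGpsd : ∀ z, 0 ≤ ⟪z, G z⟫)
    (u : ℕ → EuclideanSpace ℝ (Fin n) × EuclideanSpace ℝ (Fin m))
    (ubar : EuclideanSpace ℝ (Fin n) × EuclideanSpace ℝ (Fin m))
    (hlim : Filter.Tendsto u Filter.atTop (nhds ubar)) (hubar : ubar ∈ S)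
    (hcontract : ∀ uhat ∈ S, ∃ δ : ℝ, 0 < δ ∧ ∀ k : ℕ, 1 ≤ k →
      (1 / τ) * ‖(u k).1 - uhat.1‖ ^ 2 + ⟪(u k).2 - uhat.2, G ((u k).2 - uhat.2)⟫ ≤
        (1 / (1 + δ)) * ((1 / τ) * ‖(u (k - 1)).1 - uhat.1‖ ^ 2 +
          ⟪(u (k - 1)).2 - uhat.2, G ((u (k - 1)).2 - uhat.2)⟫)) :
    (∀ uhat ∈ S,
      (1 / τ) * ‖uhat.1 - ubar.1‖ ^ 2 + ⟪uhat.2 - ubar.2, G (uhat.2 - ubar.2)⟫ = 0) ∧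
    (∀ uhat ∈ S, uhat.1 = ubar.1) ∧
    {xhat | ∃ yhat, (xhat, yhat) ∈ S} = {ubar.1} := by
  have key : ∀ uhat ∈ S,
      (1 / τ) * ‖uhat.1 - ubar.1‖ ^ 2 + ⟪uhat.2 - ubar.2, G (uhat.2 - ubar.2)⟫ = 0 := by
    intro uhat hhat
    obtain ⟨δ, hδ, hc⟩ := hcontract uhat hhat
    set Φ : (EuclideanSpace ℝ (Fin n) × EuclideanSpace ℝ (Fin m)) → ℝ :=
      fun v => (1 / τ) * ‖v.1 - uhat.1‖ ^ 2 + ⟪v.2 - uhat.2, G (v.2 - uhat.2)⟫ with hΦ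
    have hΦnonneg : ∀ v, 0 ≤ Φ v := fun v =>
      add_nonneg (mul_nonneg (by positivity) (by positivity)) (hGpsd _)
    have hΦcont : Continuous Φ := by
      apply Continuous.add
      · fun_prop
      · exact Continuous.inner (by fun_prop) (G.continuous.comp (by fun_prop))
    set r : ℝ := 1 / (1 + δ) with hr
    have hr0 : 0 ≤ r := by positivity
    have hr1 : r < 1 := by
      rw [hr, div_lt_one (by linarith)]; linarith
    have hgeom : ∀ k : ℕ, Φ (u k) ≤ r ^ k * Φ (u 0) := by
      intro k
      induction k with
      | zero => simp
      | succ p ih =>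
        have h1 := hc (p + 1) (by omega)
        simp only [Nat.add_sub_cancel] at h1
        calc Φ (u (p + 1)) ≤ r * Φ (u p) := h1
          _ ≤ r * (r ^ p * Φ (u 0)) := by
              exact mul_le_mul_of_nonneg_left ih hr0
          _ = r ^ (p + 1) * Φ (u 0) := by ring
    have htend0 : Filter.Tendsto (fun k => Φ (u k)) Filter.atTop (nhds 0) := by
      have hub : Filter.Tendsto (fun k => r ^ k * Φ (u 0)) Filter.atTop (nhds 0) := by
        have := tendsto_pow_atTop_nhds_zero_of_lt_one hr0 hr1
        simpa using this.mul_const (Φ (u 0))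
      exact squeeze_zero (fun k => hΦnonneg _) hgeom hub
    have htend : Filter.Tendsto (fun k => Φ (u k)) Filter.atTop (nhds (Φ ubar)) :=
      (hΦcont.tendsto ubar).comp hlim
    have hΦubar : Φ ubar = 0 := tendsto_nhds_unique htend htend0
    have hval : (1 / τ) * ‖ubar.1 - uhat.1‖ ^ 2 + ⟪ubar.2 - uhat.2, G (ubar.2 - uhat.2)⟫ = 0 :=
      hΦubar
    have hswap : uhat.1 - ubar.1 = -(ubar.1 - uhat.1) := by abel
    have hswap2 : uhat.2 - ubar.2 = -(ubar.2 - uhat.2) := by abel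
    rw [hswap, hswap2, norm_neg, map_neg, inner_neg_neg]
    exact hval
  have key2 : ∀ uhat ∈ S, uhat.1 = ubar.1 := by
    intro uhat hhat
    have h := key uhat hhat
    have h1 : 0 ≤ (1 / τ) * ‖uhat.1 - ubar.1‖ ^ 2 :=
      mul_nonneg (by positivity) (by positivity)
    have h2 : 0 ≤ ⟪uhat.2 - ubar.2, G (uhat.2 - ubar.2)⟫ := hGpsd _
    have hz : (1 / τ) * ‖uhat.1 - ubar.1‖ ^ 2 = 0 := by linarith
    have hn : ‖uhat.1 - ubar.1‖ ^ 2 = 0 := by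
      have : (1 / τ) ≠ 0 := by positivity
      exact (mul_eq_zero.mp hz).resolve_left this
    have : uhat.1 - ubar.1 = 0 := by
      rwa [pow_eq_zero_iff (two_ne_zero), norm_eq_zero] at hn
    exact sub_eq_zero.mp this
  refine ⟨key, key2, ?_⟩
  ext x
  simp only [Set.mem_setOf_eq, Set.mem_singleton_iff]
  constructor
  · rintro ⟨y, hy⟩
    exact key2 (x, y) hy
  · rintro rfl
    exact ⟨ubar.2, by simpa using hubar⟩
end
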